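/- arXiv:1902.09586 — 5 statements merged into one kernel-verified Lean document; each statement's English description precedes it below -/
import Mathlib

section
/- For any itemset X contained in at least one transaction, RTWU(X) ≥ u(X); i.e., the redefined transaction-weighted utility (summing only positive-utility items over all transactions containing X) is an upper bound on the actual utility of X. -/
open Finset

def utilT {α ι : Type} (pr : α → ℤ) (q : α → ι → ℕ) (X : Finset α) (t : ι) : ℤ :=
  ∑ i ∈ X, pr i * (q i t : ℤ)

def totU {α ι : Type} [DecidableEq α] (D : Finset ι) (Trans : ι → Finset α)
    (pr : α → ℤ) (q : α → ι → ℕ) (X : Finset α) : ℤ :=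
  ∑ t ∈ D.filter (fun t => X ⊆ Trans t), utilT pr q X t

/-- Redefined transaction utility: sum of positive-utility items of the transaction. -/
def RTU {α ι : Type} [DecidableEq α] (Trans : ι → Finset α)
    (pr : α → ℤ) (q : α → ι → ℕ) (t : ι) : ℤ :=
  ∑ i ∈ (Trans t).filter (fun i => 0 < pr i), pr i * (q i t : ℤ)

def RTWU {α ι : Type} [DecidableEq α] (D : Finset ι) (Trans : ι → Finset α)
    (pr : α → ℤ) (q : α → ι → ℕ) (X : Finset α) : ℤ :=
  ∑ t ∈ D.filter (fun t => X ⊆ Trans t), RTU Trans pr q t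

theorem sum_mul_le_sum_filter_pos_mul {α R : Type*} [Ring R] [LinearOrder R]
    [IsOrderedRing R] {s t : Finset α} (hst : s ⊆ t) (a w : α → R) (hw : ∀ i, 0 ≤ w i) :
    ∑ i ∈ s, a i * w i ≤ ∑ i ∈ t with 0 < a i, a i * w i := by
  have hdrop : ∀ i, a i * w i ≤ if 0 < a i then a i * w i else 0 := fun i => by
    split_ifs with ha
    · exact le_rfl
    · exact mul_nonpos_of_nonpos_of_nonneg (not_lt.mp ha) (hw i)
  calc ∑ i ∈ s, a i * w i ≤ ∑ i ∈ s with 0 < a i, a i * w i := by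
        rw [sum_filter]; exact sum_le_sum fun i _ => hdrop i
    _ ≤ ∑ i ∈ t with 0 < a i, a i * w i :=
        sum_le_sum_of_subset_of_nonneg (filter_subset_filter _ hst)
          fun i hi _ => mul_nonneg (mem_filter.mp hi).2.le (hw i)

theorem utilT_le_RTU {α ι : Type} [DecidableEq α] (Trans : ι → Finset α) (pr : α → ℤ)
    (q : α → ι → ℕ) {X : Finset α} {t : ι} (hX : X ⊆ Trans t) :
    utilT pr q X t ≤ RTU Trans pr q t :=
  sum_mul_le_sum_filter_pos_mul hX pr (fun i => (q i t : ℤ)) fun _ => Int.natCast_nonneg _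

theorem stmt2_general {α ι : Type} [DecidableEq α] (D : Finset ι) (Trans : ι → Finset α)
    (pr : α → ℤ) (q : α → ι → ℕ) (X : Finset α) :
    totU D Trans pr q X ≤ RTWU D Trans pr q X :=
  sum_le_sum fun _ ht => utilT_le_RTU Trans pr q (mem_filter.mp ht).2

theorem stmt2 {α ι : Type} [DecidableEq α] (D : Finset ι) (Trans : ι → Finset α)
    (pr : α → ℤ) (q : α → ι → ℕ) (hq : ∀ i t, 0 < q i t) (X : Finset α)
    (hX : ∃ t ∈ D, X ⊆ Trans t) :
    totU D Trans pr q X ≤ RTWU D Trans pr q X :=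
  stmt2_general D Trans pr q X
end

section
/- Upper-bound utility property: for itemsets X ⊆ Y with respect to a total order ≻ on items where every item of Y\X succeeds every item of X, SUM(Y.pu) + SUM(Y.rpu) ≤ SUM(X.pu) + SUM(X.rpu). -/
open Finset

/-- Positive utility of itemset `Z` in transaction `t`. -/
def puT {α ι : Type} [DecidableEq α] (pr : α → ℤ) (q : α → ι → ℕ) (Z : Finset α) (t : ι) : ℤ :=
  ∑ i ∈ Z.filter (fun i => 0 < pr i), pr i * (q i t : ℤ)

/-- Remaining positive utility: positive-utility items of the transaction succeeding
all items of `Z` in the processing order. -/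
def rpuT {α ι : Type} [DecidableEq α] [LinearOrder α] (Trans : ι → Finset α)
    (pr : α → ℤ) (q : α → ι → ℕ) (Z : Finset α) (t : ι) : ℤ :=
  ∑ i ∈ (Trans t).filter (fun i => (∀ x ∈ Z, x < i) ∧ 0 < pr i), pr i * (q i t : ℤ)

def SUMpu {α ι : Type} [DecidableEq α] (D : Finset ι) (Trans : ι → Finset α)
    (pr : α → ℤ) (q : α → ι → ℕ) (Z : Finset α) : ℤ :=
  ∑ t ∈ D.filter (fun t => Z ⊆ Trans t), puT pr q Z t

def SUMrpu {α ι : Type} [DecidableEq α] [LinearOrder α] (D : Finset ι) (Trans : ι → Finset α)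
    (pr : α → ℤ) (q : α → ι → ℕ) (Z : Finset α) : ℤ :=
  ∑ t ∈ D.filter (fun t => Z ⊆ Trans t), rpuT Trans pr q Z t

theorem stmt6 {α ι : Type} [DecidableEq α] [LinearOrder α] (D : Finset ι)
    (Trans : ι → Finset α) (pr : α → ℤ) (q : α → ι → ℕ)
    (hord : ∀ i j : α, 0 < pr i → pr j < 0 → i < j)
    (X Y : Finset α) (hXY : X ⊆ Y)
    (hsucc : ∀ j ∈ Y \ X, ∀ i ∈ X, i < j) :
    SUMpu D Trans pr q Y + SUMrpu D Trans pr q Y ≤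
      SUMpu D Trans pr q X + SUMrpu D Trans pr q X := by
  have hnonneg : ∀ (Z : Finset α) (t : ι),
      0 ≤ puT pr q Z t + rpuT Trans pr q Z t := by
    intro Z t
    have h1 : 0 ≤ puT pr q Z t := by
      apply Finset.sum_nonneg
      intro i hi
      have := (Finset.mem_filter.mp hi).2
      positivity
    have h2 : 0 ≤ rpuT Trans pr q Z t := by
      apply Finset.sum_nonneg
      intro i hi
      have := (Finset.mem_filter.mp hi).2.2
      positivity
    linarith
  have hdisj : ∀ (Z : Finset α) (t : ι),
      Disjoint (Z.filter (fun i => 0 < pr i))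
        ((Trans t).filter (fun i => (∀ x ∈ Z, x < i) ∧ 0 < pr i)) := by
    intro Z t
    rw [Finset.disjoint_left]
    intro i hi hi'
    have h1 := (Finset.mem_filter.mp hi).1
    have h2 := (Finset.mem_filter.mp hi').2.1 i h1
    exact lt_irrefl i h2
  -- per-transaction inequality
  have hperT : ∀ t : ι, Y ⊆ Trans t →
      puT pr q Y t + rpuT Trans pr q Y t ≤ puT pr q X t + rpuT Trans pr q X t := by
    intro t hYt
    unfold puT rpuT
    rw [← Finset.sum_union (hdisj Y t), ← Finset.sum_union (hdisj X t)]
    apply Finset.sum_le_sum_of_subset_of_nonneg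
    · intro i hi
      rcases Finset.mem_union.mp hi with hi | hi
      · have h1 := (Finset.mem_filter.mp hi).1
        have h2 := (Finset.mem_filter.mp hi).2
        by_cases hX : i ∈ X
        · exact Finset.mem_union_left _ (Finset.mem_filter.mpr ⟨hX, h2⟩)
        · refine Finset.mem_union_right _ (Finset.mem_filter.mpr ⟨hYt h1, ?_, h2⟩)
          intro x hx
          exact hsucc i (Finset.mem_sdiff.mpr ⟨h1, hX⟩) x hx
      · have h1 := Finset.mem_filter.mp hi
        refine Finset.mem_union_right _ (Finset.mem_filter.mpr ⟨h1.1, ?_, h1.2.2⟩)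
        intro x hx
        exact h1.2.1 x (hXY hx)
    · intro i hi _
      have hpos : 0 < pr i := by
        rcases Finset.mem_union.mp hi with hi | hi
        · exact (Finset.mem_filter.mp hi).2
        · exact (Finset.mem_filter.mp hi).2.2
      positivity
  unfold SUMpu SUMrpu
  rw [← Finset.sum_add_distrib, ← Finset.sum_add_distrib]
  calc ∑ t ∈ D.filter (fun t => Y ⊆ Trans t),
          (puT pr q Y t + rpuT Trans pr q Y t)
      ≤ ∑ t ∈ D.filter (fun t => Y ⊆ Trans t),
          (puT pr q X t + rpuT Trans pr q X t) := by
        apply Finset.sum_le_sum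
        intro t ht
        exact hperT t (Finset.mem_filter.mp ht).2
    _ ≤ ∑ t ∈ D.filter (fun t => X ⊆ Trans t),
          (puT pr q X t + rpuT Trans pr q X t) := by
        apply Finset.sum_le_sum_of_subset_of_nonneg
        · apply Finset.monotone_filter_right
          intro t _ ht
          exact hXY.trans ht
        · intro t _ _
          exact hnonneg X t
end

section
/- If SUM(X.pu) + SUM(X.rpu) < minUtil for an itemset X, then no extension Y of X (with all added items succeeding the items of X in the processing order) can have u(Y) ≥ minUtil; that is, no such extension is a potential high-utility itemset with respect to the utility condition. -/
/-! In each transaction `t ⊇ Y`, dropping the negative utilities gives `u(Y,t) ≤ pu(Y,t)`, and the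
items of `Y \ X` occur in `t` and succeed all of `X`, so their positive utilities are counted in
`rpu(X,t)`: `pu(Y,t) ≤ pu(X,t) + rpu(X,t)`. Summing over `t ⊇ Y` and enlarging the range to
`t ⊇ X` (the summands are nonnegative) bounds `u(Y)` by `SUM(X.pu) + SUM(X.rpu)`. -/

open Finset

section Utility

variable {α ι : Type} [DecidableEq α] (pr : α → ℤ) (q : α → ι → ℕ)

lemma utilT_le_puT (Y : Finset α) (t : ι) : utilT pr q Y t ≤ puT pr q Y t := by
  unfold utilT puT
  rw [← sum_filter_add_sum_filter_not Y (fun i => 0 < pr i)]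
  have hneg : ∑ i ∈ Y.filter (fun i => ¬ 0 < pr i), pr i * (q i t : ℤ) ≤ 0 :=
    sum_nonpos fun _ hi => mul_nonpos_of_nonpos_of_nonneg (not_lt.1 (mem_filter.1 hi).2)
      (Int.natCast_nonneg _)
  linarith

lemma puT_nonneg (Z : Finset α) (t : ι) : 0 ≤ puT pr q Z t :=
  sum_nonneg fun _ hi => mul_nonneg (mem_filter.1 hi).2.le (Int.natCast_nonneg _)

variable [LinearOrder α] (Trans : ι → Finset α)

lemma rpuT_nonneg (Z : Finset α) (t : ι) : 0 ≤ rpuT Trans pr q Z t :=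
  sum_nonneg fun _ hi => mul_nonneg (mem_filter.1 hi).2.2.le (Int.natCast_nonneg _)

lemma puT_le_puT_add_rpuT {X Y : Finset α} {t : ι} (hXY : X ⊆ Y) (hYt : Y ⊆ Trans t)
    (hsucc : ∀ j ∈ Y \ X, ∀ i ∈ X, i < j) :
    puT pr q Y t ≤ puT pr q X t + rpuT Trans pr q X t := by
  have hsplit : puT pr q Y t
      = ∑ i ∈ (Y \ X).filter (fun i => 0 < pr i), pr i * (q i t : ℤ) + puT pr q X t := by
    simp only [puT, sum_filter]
    exact (sum_sdiff hXY).symm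
  have hrest : ∑ i ∈ (Y \ X).filter (fun i => 0 < pr i), pr i * (q i t : ℤ)
      ≤ rpuT Trans pr q X t := by
    refine sum_le_sum_of_subset_of_nonneg (fun i hi => ?_) fun _ hi _ =>
      mul_nonneg (mem_filter.1 hi).2.2.le (Int.natCast_nonneg _)
    obtain ⟨hiYX, hpos⟩ := mem_filter.1 hi
    exact mem_filter.2 ⟨hYt (mem_sdiff.1 hiYX).1, hsucc i hiYX, hpos⟩
  linarith

lemma totU_le_SUMpu_add_SUMrpu (D : Finset ι) {X Y : Finset α} (hXY : X ⊆ Y)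
    (hsucc : ∀ j ∈ Y \ X, ∀ i ∈ X, i < j) :
    totU D Trans pr q Y ≤ SUMpu D Trans pr q X + SUMrpu D Trans pr q X := by
  have hD : D.filter (fun t => Y ⊆ Trans t) ⊆ D.filter (fun t => X ⊆ Trans t) :=
    monotone_filter_right D fun _ _ hY => hXY.trans hY
  calc totU D Trans pr q Y
      ≤ ∑ t ∈ D.filter (fun t => Y ⊆ Trans t), (puT pr q X t + rpuT Trans pr q X t) :=
        sum_le_sum fun t ht => (utilT_le_puT pr q Y t).trans
          (puT_le_puT_add_rpuT pr q Trans hXY (mem_filter.1 ht).2 hsucc)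
    _ ≤ ∑ t ∈ D.filter (fun t => X ⊆ Trans t), (puT pr q X t + rpuT Trans pr q X t) :=
        sum_le_sum_of_subset_of_nonneg hD fun t _ _ =>
          add_nonneg (puT_nonneg pr q X t) (rpuT_nonneg pr q Trans X t)
    _ = SUMpu D Trans pr q X + SUMrpu D Trans pr q X := sum_add_distrib

end Utility

theorem stmt8_general {α ι : Type} [DecidableEq α] [LinearOrder α] (D : Finset ι)
    (Trans : ι → Finset α) (pr : α → ℤ) (q : α → ι → ℕ)
    (minUtil : ℤ) (X : Finset α)
    (h : SUMpu D Trans pr q X + SUMrpu D Trans pr q X < minUtil) :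
    ∀ Y : Finset α, X ⊆ Y → (∀ j ∈ Y \ X, ∀ i ∈ X, i < j) →
      totU D Trans pr q Y < minUtil :=
  fun _ hXY hsucc => (totU_le_SUMpu_add_SUMrpu pr q Trans D hXY hsucc).trans_lt h

theorem stmt8 {α ι : Type} [DecidableEq α] [LinearOrder α] (D : Finset ι)
    (Trans : ι → Finset α) (pr : α → ℤ) (q : α → ι → ℕ)
    (hord : ∀ i j : α, 0 < pr i → pr j < 0 → i < j)
    (minUtil : ℤ) (X : Finset α)
    (h : SUMpu D Trans pr q X + SUMrpu D Trans pr q X < minUtil) :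
    ∀ Y : Finset α, X ⊆ Y → (∀ j ∈ Y \ X, ∀ i ∈ X, i < j) →
      totU D Trans pr q Y < minUtil :=
  stmt8_general D Trans pr q minUtil X h
end

section
/- If RTWU(X) < minUtil, then no superset Y of X can be a high-utility itemset, i.e., u(Y) < minUtil for all Y ⊇ X. -/
open Finset

theorem stmt10 {α ι : Type} [DecidableEq α] (D : Finset ι) (Trans : ι → Finset α)
    (pr : α → ℤ) (q : α → ι → ℕ) (hq : ∀ i t, 0 < q i t)
    (minUtil : ℤ) (X : Finset α) (h : RTWU D Trans pr q X < minUtil) :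
    ∀ Y : Finset α, X ⊆ Y → totU D Trans pr q Y < minUtil := by
  intro Y hXY
  have h1 : totU D Trans pr q Y ≤ RTWU D Trans pr q Y := by
    apply Finset.sum_le_sum
    intro t ht
    have hYt : Y ⊆ Trans t := (Finset.mem_filter.mp ht).2
    have step1 : utilT pr q Y t ≤
        ∑ i ∈ Y.filter (fun i => 0 < pr i), pr i * (q i t : ℤ) := by
      unfold utilT
      rw [← Finset.sum_filter_add_sum_filter_not Y (fun i => 0 < pr i)]
      have : ∑ i ∈ Y.filter (fun i => ¬ 0 < pr i), pr i * (q i t : ℤ) ≤ 0 :=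
        Finset.sum_nonpos fun i hi =>
          mul_nonpos_of_nonpos_of_nonneg
            (le_of_not_gt (Finset.mem_filter.mp hi).2) (Int.ofNat_nonneg _)
      linarith
    exact le_trans step1 (Finset.sum_le_sum_of_subset_of_nonneg
      (Finset.filter_subset_filter _ hYt)
      (fun i hi _ => mul_nonneg (le_of_lt (Finset.mem_filter.mp hi).2)
        (Int.ofNat_nonneg _)))
  have h2 : RTWU D Trans pr q Y ≤ RTWU D Trans pr q X := by
    unfold RTWU
    apply Finset.sum_le_sum_of_subset_of_nonneg
      (Finset.monotone_filter_right D (fun t _ ht => hXY.trans ht))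
    · intro t _ _
      exact Finset.sum_nonneg fun i hi =>
        mul_nonneg (le_of_lt (Finset.mem_filter.mp hi).2) (Int.ofNat_nonneg _)
  linarith
end

section
/- PU-Prune soundness (probability part): for an itemset Y and item z with z ≻ y for all y ∈ Y, if SUM(Y.pro) − Σ_{T∈D, Y⊆T, z∉T} p(Y,T) < minPro·|D|, then Pro(W) < minPro·|D| for every superset W of Y∪{z}. -/
open Finset

def probT {α ι : Type} (p : α → ι → ℝ) (X : Finset α) (t : ι) : ℝ :=
  ∏ i ∈ X, p i t

def Pro {α ι : Type} [DecidableEq α] (D : Finset ι) (Trans : ι → Finset α)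
    (p : α → ι → ℝ) (X : Finset α) : ℝ :=
  ∑ t ∈ D.filter (fun t => X ⊆ Trans t), probT p X t

/-!
The transactions containing `Y` split according to whether they contain `z`, so the left side of
the hypothesis is the expected support of `Y` over the transactions containing `Y ∪ {z}`. Every
superset `W` of `Y ∪ {z}` occurs only in those transactions, and there `p(W,T) ≤ p(Y,T)` because
the extra factors are probabilities.
-/

section

variable {α ι : Type} (p : α → ι → ℝ)

theorem probT_nonneg (hp : ∀ i t, 0 ≤ p i t) (X : Finset α) (t : ι) : 0 ≤ probT p X t :=
  prod_nonneg fun i _ => hp i t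

theorem probT_anti [DecidableEq α] (hp : ∀ i t, 0 ≤ p i t ∧ p i t ≤ 1) {Y W : Finset α}
    (hYW : Y ⊆ W) (t : ι) : probT p W t ≤ probT p Y t := by
  unfold probT
  rw [← prod_sdiff hYW]
  have hextra : ∏ i ∈ W \ Y, p i t ≤ 1 :=
    prod_le_one (fun i _ => (hp i t).1) fun i _ => (hp i t).2
  exact mul_le_of_le_one_left (probT_nonneg p (fun i t => (hp i t).1) Y t) hextra

variable [DecidableEq α] (D : Finset ι) (Trans : ι → Finset α)

theorem pro_sub_sum_not_mem_eq (Y : Finset α) (z : α) :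
    Pro D Trans p Y - ∑ t ∈ D.filter (fun t => Y ⊆ Trans t ∧ z ∉ Trans t), probT p Y t =
      ∑ t ∈ D.filter (fun t => Y ⊆ Trans t ∧ z ∈ Trans t), probT p Y t := by
  have hsplit := sum_filter_add_sum_filter_not
    (D.filter (fun t => Y ⊆ Trans t)) (fun t => z ∈ Trans t) (probT p Y)
  rw [filter_filter, filter_filter] at hsplit
  rw [Pro, ← hsplit, add_sub_cancel_right]

theorem pro_le_sum_of_insert_subset (hp : ∀ i t, 0 ≤ p i t ∧ p i t ≤ 1) {Y W : Finset α}
    {z : α} (hW : insert z Y ⊆ W) :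
    Pro D Trans p W ≤ ∑ t ∈ D.filter (fun t => Y ⊆ Trans t ∧ z ∈ Trans t), probT p Y t := by
  have hsub : D.filter (fun t => W ⊆ Trans t) ⊆
      D.filter (fun t => Y ⊆ Trans t ∧ z ∈ Trans t) := by
    intro t ht
    rw [mem_filter] at ht ⊢
    have hins : insert z Y ⊆ Trans t := hW.trans ht.2
    exact ⟨ht.1, (subset_insert z Y).trans hins, hins (mem_insert_self z Y)⟩
  calc Pro D Trans p W
      ≤ ∑ t ∈ D.filter (fun t => W ⊆ Trans t), probT p Y t :=
        sum_le_sum fun t _ => probT_anti p hp ((subset_insert z Y).trans hW) t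
    _ ≤ _ := sum_le_sum_of_subset_of_nonneg hsub fun t _ _ =>
        probT_nonneg p (fun i t => (hp i t).1) Y t

end

theorem stmt13_general {α ι : Type} [DecidableEq α] (D : Finset ι)
    (Trans : ι → Finset α) (p : α → ι → ℝ)
    (hp : ∀ i t, 0 ≤ p i t ∧ p i t ≤ 1)
    (minPro : ℝ) (Y : Finset α) (z : α)
    (h : Pro D Trans p Y -
        (∑ t ∈ D.filter (fun t => Y ⊆ Trans t ∧ z ∉ Trans t), probT p Y t) <
          minPro * D.card) :
    ∀ W : Finset α, insert z Y ⊆ W → Pro D Trans p W < minPro * D.card := by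
  intro W hW
  rw [pro_sub_sum_not_mem_eq] at h
  exact (pro_le_sum_of_insert_subset p D Trans hp hW).trans_lt h

/-- PU-Prune soundness, probability part. -/
theorem stmt13 {α ι : Type} [DecidableEq α] [LinearOrder α] (D : Finset ι)
    (Trans : ι → Finset α) (p : α → ι → ℝ)
    (hp : ∀ i t, 0 ≤ p i t ∧ p i t ≤ 1)
    (minPro : ℝ) (Y : Finset α) (z : α) (hz : ∀ y ∈ Y, y < z)
    (h : Pro D Trans p Y -
        (∑ t ∈ D.filter (fun t => Y ⊆ Trans t ∧ z ∉ Trans t), probT p Y t) <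
          minPro * D.card) :
    ∀ W : Finset α, insert z Y ⊆ W → Pro D Trans p W < minPro * D.card :=
  stmt13_general D Trans p hp minPro Y z h
end
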